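/- Let γ > 1, let p > 0, and let u, v ∈ ℝ. Let U_L = (ρ_L, u, v, p) and U_R = (ρ_R, u, v, p) be two states with equal velocities and equal pressures and positive densities ρ_L, ρ_R. Then the CH_RA two-point flux in the x-direction takes the closed form F^#(U_L, U_R) = (ρ^ln u, ρ^ln u² + p, ρ^ln u v, u(Ê + p)), where ρ^ln is the logarithmic mean of ρ_L, ρ_R and Ê = p/(γ−1) + (1/2)ρ^ln(u² + v²); this is the structural identity underlying the pressure-equilibrium-preservation (PEP) property of the CH_RA flux. -/
import Mathlib


/-- Arithmetic mean `{{a}} = (a_L + a_R)/2`. -/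
noncomputable def avg (aL aR : ℝ) : ℝ := (aL + aR) / 2

/-- Logarithmic mean `a^ln = (a_L − a_R)/(ln a_L − ln a_R)`, defined as the common
value when the two arguments coincide. -/
noncomputable def logMean (aL aR : ℝ) : ℝ :=
  if aL = aR then aL else (aL - aR) / (Real.log aL - Real.log aR)

/-- The CH_RA (Chandrashekar–Ranocha) two-point flux in the x-direction, as a
function of the primitive states `(ρ, u, v, p)` on the left and right. -/
noncomputable def chraFlux (γ ρL uL vL pL ρR uR vR pR : ℝ) : Fin 4 → ℝ :=
  let ρh := logMean ρL ρR
  let uh := avg uL uR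
  let vh := avg vL vR
  let p1 := avg pL pR
  let p2 := logMean (ρL / pL) (ρR / pR)
  let hh := 1 / ((γ - 1) * p2) + (1 / 2) * (2 * uh ^ 2 - avg (uL ^ 2) (uR ^ 2))
    + (1 / 2) * (2 * vh ^ 2 - avg (vL ^ 2) (vR ^ 2)) + 2 * p1 / ρh
  ![ρh * uh, ρh * uh ^ 2 + p1, ρh * uh * vh, ρh * uh * hh - avg (uL * pL) (uR * pR)]

lemma avg_self (a : ℝ) : avg a a = a := by simp [avg]

lemma logMean_pos {a b : ℝ} (ha : 0 < a) (hb : 0 < b) : 0 < logMean a b := by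
  unfold logMean
  split_ifs with h
  · exact ha
  · rcases lt_or_gt_of_ne h with hlt | hlt
    · have hlog : Real.log a < Real.log b := Real.log_lt_log ha hlt
      exact div_pos_of_neg_of_neg (by linarith) (by linarith)
    · have hlog : Real.log b < Real.log a := Real.log_lt_log hb hlt
      exact div_pos (by linarith) (by linarith)

lemma logMean_div {a b p : ℝ} (ha : 0 < a) (hb : 0 < b) (hp : 0 < p) :
    logMean (a / p) (b / p) = logMean a b / p := by
  unfold logMean
  have hp' : p ≠ 0 := hp.ne'
  have hiff : a / p = b / p ↔ a = b := div_left_inj' hp'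
  split_ifs with h h' h'
  · rfl
  · exact absurd (hiff.mp h) h'
  · exact absurd (hiff.mpr h') h
  · rw [Real.log_div ha.ne' hp', Real.log_div hb.ne' hp']
    ring_nf

/-- Structural identity underlying the pressure-equilibrium-preservation (PEP)
property of the CH_RA flux: for two states with equal velocities and equal
pressures, the flux takes the closed form
`(ρ^ln u, ρ^ln u² + p, ρ^ln u v, u(Ê + p))` with
`Ê = p/(γ−1) + (1/2) ρ^ln (u² + v²)`. -/
theorem chraFlux_pep (γ : ℝ) (hγ : 1 < γ) (p : ℝ) (hp : 0 < p) (u v : ℝ)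
    (ρL ρR : ℝ) (hρL : 0 < ρL) (hρR : 0 < ρR)
    (Ehat : ℝ)
    (hE : Ehat = p / (γ - 1) + (1 / 2) * logMean ρL ρR * (u ^ 2 + v ^ 2)) :
    chraFlux γ ρL u v p ρR u v p =
      ![logMean ρL ρR * u, logMean ρL ρR * u ^ 2 + p,
        logMean ρL ρR * u * v, u * (Ehat + p)] := by
  have hρ : 0 < logMean ρL ρR := logMean_pos hρL hρR
  have hγ1 : γ - 1 ≠ 0 := by linarith
  unfold chraFlux
  rw [logMean_div hρL hρR hp]
  simp only [avg_self]
  funext i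
  fin_cases i <;> simp <;> field_simp <;> ring_nf
  subst hE
  field_simp
  ring
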